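/- Transport identity for volume integrals: if f : ℝᵈ × I → ℝ is C¹ and M_θ(x,t) = x + tθ(x) with θ a C¹ compactly supported vector field, then d/dt ∫_{M_θ(Ω,t)} f(y,t) dy at t = 0 equals ∫_Ω (D_{t,θ} f + (∇·θ) f(·,0)), where D_{t,θ} f(x) = d/dt f(M_θ(x,t), t)|_{t=0}. -/

import Mathlib

open Matrix MeasureTheory

noncomputable def jac {d : ℕ} (v : (Fin d → ℝ) → (Fin d → ℝ)) (x : Fin d → ℝ) :
    Matrix (Fin d) (Fin d) ℝ :=
  Matrix.of fun i j => fderiv ℝ v x (Pi.single j 1) i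

section TransportAux
open Polynomial
attribute [local instance] Matrix.normedAddCommGroup Matrix.normedSpace

private lemma contDiff_det' {d : ℕ} :
    ContDiff ℝ (⊤ : ℕ∞) (Matrix.det : Matrix (Fin d) (Fin d) ℝ → ℝ) := by
  have h : (Matrix.det : Matrix (Fin d) (Fin d) ℝ → ℝ) =
      fun M => ∑ σ : Equiv.Perm (Fin d), (Equiv.Perm.sign σ : ℝ) * ∏ i, M (σ i) i := by
    funext M; rw [Matrix.det_apply']
  rw [h]
  exact ContDiff.sum fun σ _ => contDiff_const.mul (contDiff_prod fun i _ =>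
    contDiff_pi.mp (contDiff_pi.mp contDiff_id (σ i)) i)

private lemma hasDerivAt_det_aux {d : ℕ} (M N : Matrix (Fin d) (Fin d) ℝ) (t : ℝ) :
    HasDerivAt (fun s : ℝ => Matrix.det (N + s • M))
      (fderiv ℝ Matrix.det (N + t • M) M) t := by
  have hinner : HasDerivAt (fun s : ℝ => N + s • M) M t := by
    exact (((hasDerivAt_id t).smul_const M).const_add N).congr_deriv (one_smul ℝ M)
  exact ((contDiff_det'.differentiable (by simp) _).hasFDerivAt).comp_hasDerivAt t hinner

private lemma hasDerivAt_det_one_add_smul' {d : ℕ} (M : Matrix (Fin d) (Fin d) ℝ) :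
    HasDerivAt (fun t : ℝ => Matrix.det (1 + t • M)) M.trace 0 := by
  have heq : (fun t : ℝ => Matrix.det (1 + t • M)) =
      fun t : ℝ => 1 + M.trace * t +
        Polynomial.eval t (Matrix.det (1 + (X : ℝ[X]) • M.map C)).divX.divX * t ^ 2 := by
    funext t; exact Matrix.det_one_add_smul t M
  rw [heq]
  set q := (Matrix.det (1 + (X : ℝ[X]) • M.map C)).divX.divX
  have h1 : HasDerivAt (fun t : ℝ => 1 + M.trace * t) M.trace 0 := by
    simpa using ((hasDerivAt_id (0:ℝ)).const_mul M.trace).const_add 1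
  have h2 : HasDerivAt (fun t : ℝ => Polynomial.eval t q * t ^ 2) 0 0 := by
    exact ((q.hasDerivAt (0:ℝ)).mul (hasDerivAt_pow 2 (0:ℝ))).congr_deriv (by simp)
  exact (h1.add h2).congr_deriv (by simp)

private lemma fderiv_det_one_apply {d : ℕ} (M : Matrix (Fin d) (Fin d) ℝ) :
    fderiv ℝ Matrix.det (1 : Matrix (Fin d) (Fin d) ℝ) M = M.trace := by
  have h1 := hasDerivAt_det_aux M 1 0
  simp only [zero_smul, add_zero] at h1
  exact h1.unique (hasDerivAt_det_one_add_smul' M)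

/-- transport identity for volume integrals. For `f` of class
`C¹` and `θ` a `C¹` compactly supported vector field, with
`M_θ(Ω,t) = {x + tθ(x) : x ∈ Ω}`,
`d/dt ∫_{M_θ(Ω,t)} f(y,t) dy |_{t=0} = ∫_Ω (D_{t,θ}f + (∇·θ) f(·,0))`
where `D_{t,θ}f(x) = d/dt f(x + tθ(x), t)|_{t=0}`. -/
theorem transport_identity {d : ℕ} (Ω : Set (Fin d → ℝ))
    (hΩo : IsOpen Ω) (hΩb : Bornology.IsBounded Ω)
    (θ : (Fin d → ℝ) → (Fin d → ℝ)) (hθ : ContDiff ℝ 1 θ)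
    (hθc : HasCompactSupport θ)
    (f : ((Fin d → ℝ) × ℝ) → ℝ) (hf : ContDiff ℝ 1 f) :
    HasDerivAt
      (fun t : ℝ => ∫ y in (fun x => x + t • θ x) '' Ω, f (y, t))
      (∫ x in Ω,
        (deriv (fun t : ℝ => f (x + t • θ x, t)) 0 + (jac θ x).trace * f (x, 0)))
      0 := by
  classical
  have hθd : Differentiable ℝ θ := hθ.differentiable one_ne_zero
  have hfd : Differentiable ℝ f := hf.differentiable one_ne_zero
  have hjac : Continuous (jac θ) := by
    have h1 : Continuous (fderiv ℝ θ) := hθ.continuous_fderiv one_ne_zero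
    apply continuous_matrix; intro i j
    exact (continuous_apply i).comp
      ((ContinuousLinearMap.apply ℝ (Fin d → ℝ) (Pi.single j 1)).continuous.comp h1)
  obtain ⟨K, hK⟩ := hθ.lipschitzWith_of_hasCompactSupport hθc one_ne_zero
  -- the map and its spatial derivative
  set A : ℝ → (Fin d → ℝ) → ((Fin d → ℝ) →L[ℝ] (Fin d → ℝ)) :=
    fun t x => ContinuousLinearMap.id ℝ _ + t • fderiv ℝ θ x with hA
  have hφderiv : ∀ (t : ℝ) x, HasFDerivAt (fun x => x + t • θ x) (A t x) x := by
    intro t x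
    exact (hasFDerivAt_id x).add ((hθd x).hasFDerivAt.const_smul t)
  have hdetA : ∀ (t : ℝ) x, (A t x).det = Matrix.det (1 + t • jac θ x) := by
    intro t x
    have h1 : (((ContinuousLinearMap.id ℝ (Fin d → ℝ) + t • fderiv ℝ θ x) :
        (Fin d → ℝ) →L[ℝ] (Fin d → ℝ)) : (Fin d → ℝ) →ₗ[ℝ] (Fin d → ℝ))
        = LinearMap.id + t • ((fderiv ℝ θ x : (Fin d → ℝ) →L[ℝ] (Fin d → ℝ)) :
            (Fin d → ℝ) →ₗ[ℝ] (Fin d → ℝ)) := by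
      ext v; simp
    rw [hA, ContinuousLinearMap.det, h1, ← LinearMap.det_toMatrix', map_add,
      _root_.map_smul, LinearMap.toMatrix'_id]
    congr 2
  -- injectivity for small t
  have hinj : ∀ t : ℝ, |t| * K < 1 → Function.Injective (fun x => x + t • θ x) := by
    intro t ht x y hxy
    simp only at hxy
    have h1 : x - y = t • (θ y - θ x) := by
      abel_nf
      abel_nf at hxy
      linear_combination (norm := module) hxy
    by_contra hne
    have h2 : ‖x - y‖ ≤ |t| * (K * ‖x - y‖) := by
      calc ‖x - y‖ = |t| * ‖θ y - θ x‖ := by rw [h1, norm_smul, Real.norm_eq_abs]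
      _ ≤ |t| * (K * ‖x - y‖) := by
          apply mul_le_mul_of_nonneg_left _ (abs_nonneg t)
          have h3 := hK.dist_le_mul y x
          rw [dist_eq_norm, dist_eq_norm] at h3
          rw [norm_sub_rev y x] at h3
          exact h3
    have h3 : 0 < ‖x - y‖ := by simpa [sub_eq_zero] using hne
    nlinarith
  have hQ : IsCompact (closure Ω) := hΩb.isCompact_closure
  -- uniform positivity of the determinant for small t
  obtain ⟨ε₂, hε₂, hpos⟩ : ∃ ε > (0:ℝ), ∀ t : ℝ, |t| < ε → ∀ x ∈ closure Ω,
      (1:ℝ)/2 < Matrix.det (1 + t • jac θ x) := by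
    have hG : Continuous fun p : ℝ × (Fin d → ℝ) => Matrix.det (1 + p.1 • jac θ p.2) :=
      contDiff_det'.continuous.comp
        (continuous_const.add (continuous_fst.smul (hjac.comp continuous_snd)))
    have hU : IsOpen {p : ℝ × (Fin d → ℝ) | (1:ℝ)/2 < Matrix.det (1 + p.1 • jac θ p.2)} :=
      isOpen_lt continuous_const hG
    have hsub : ({(0:ℝ)} ×ˢ closure Ω) ⊆
        {p : ℝ × (Fin d → ℝ) | (1:ℝ)/2 < Matrix.det (1 + p.1 • jac θ p.2)} := by
      rintro ⟨t, x⟩ ⟨ht, hx⟩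
      simp only [Set.mem_singleton_iff] at ht
      subst ht
      simp only [Set.mem_setOf_eq, zero_smul, add_zero, Matrix.det_one]
      norm_num
    obtain ⟨u, v, hu, hv, h0u, hQv, huv⟩ :=
      generalized_tube_lemma isCompact_singleton hQ hU hsub
    obtain ⟨ε, hε, hball⟩ := Metric.isOpen_iff.mp hu 0 (h0u rfl)
    refine ⟨ε, hε, fun t ht x hx => ?_⟩
    have htb : t ∈ Metric.ball (0:ℝ) ε := by
      rw [Metric.mem_ball, Real.dist_eq, sub_zero]; exact ht
    have hmem : ((t, x) : ℝ × (Fin d → ℝ)) ∈ u ×ˢ v := ⟨hball htb, hQv hx⟩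
    exact huv hmem
  -- the radius
  set ε : ℝ := min (min ((1:ℝ)/(K+1)) ε₂) 1 with hε
  have hεpos : 0 < ε := by
    refine lt_min (lt_min ?_ hε₂) one_pos
    positivity
  have hεK : ∀ t : ℝ, |t| < ε → |t| * K < 1 := by
    intro t ht
    have h1 : |t| < 1/((K:ℝ)+1) := lt_of_lt_of_le ht ((min_le_left _ _).trans (min_le_left _ _))
    have h2 : (0:ℝ) ≤ K := K.coe_nonneg
    calc |t| * (K:ℝ) ≤ |t| * ((K:ℝ)+1) := by nlinarith [abs_nonneg t]
    _ < (1/((K:ℝ)+1)) * ((K:ℝ)+1) := by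
        apply mul_lt_mul_of_pos_right h1; positivity
    _ = 1 := by field_simp
  -- integrand and its t-derivative
  set F : ℝ → (Fin d → ℝ) → ℝ :=
    fun t x => Matrix.det (1 + t • jac θ x) * f (x + t • θ x, t) with hF
  set F' : ℝ → (Fin d → ℝ) → ℝ := fun t x =>
    fderiv ℝ Matrix.det (1 + t • jac θ x) (jac θ x) * f (x + t • θ x, t)
      + Matrix.det (1 + t • jac θ x) * fderiv ℝ f (x + t • θ x, t) (θ x, 1) with hF'
  have hcomp : ∀ (x : Fin d → ℝ) (t : ℝ),
      HasDerivAt (fun s : ℝ => f (x + s • θ x, s)) (fderiv ℝ f (x + t • θ x, t) (θ x, 1)) t := by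
    intro x t
    have hψ : HasDerivAt (fun s : ℝ => (x + s • θ x, s)) ((θ x, 1) : (Fin d → ℝ) × ℝ) t := by
      refine HasDerivAt.prodMk ?_ (hasDerivAt_id t)
      exact (((hasDerivAt_id t).smul_const (θ x)).const_add x).congr_deriv (one_smul ℝ (θ x))
    exact ((hfd _).hasFDerivAt).comp_hasDerivAt t hψ
  have hFdiff : ∀ (x : Fin d → ℝ) (t : ℝ), HasDerivAt (fun s => F s x) (F' t x) t :=
    fun x t => (hasDerivAt_det_aux (jac θ x) 1 t).mul (hcomp x t)
  -- continuity
  have hFcont : ∀ t : ℝ, Continuous (F t) := by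
    intro t
    apply Continuous.mul
    · exact contDiff_det'.continuous.comp (continuous_const.add (hjac.const_smul t))
    · exact hf.continuous.comp
        ((continuous_id.add (hθ.continuous.const_smul t)).prodMk continuous_const)
  have hF'cont : Continuous fun p : ℝ × (Fin d → ℝ) => F' p.1 p.2 := by
    have hm : Continuous fun p : ℝ × (Fin d → ℝ) =>
        (1 : Matrix (Fin d) (Fin d) ℝ) + p.1 • jac θ p.2 :=
      continuous_const.add (continuous_fst.smul (hjac.comp continuous_snd))
    have hpt : Continuous fun p : ℝ × (Fin d → ℝ) =>
        ((p.2 + p.1 • θ p.2, p.1) : (Fin d → ℝ) × ℝ) :=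
      (continuous_snd.add (continuous_fst.smul (hθ.continuous.comp continuous_snd))).prodMk
        continuous_fst
    apply Continuous.add
    · apply Continuous.mul
      · exact isBoundedBilinearMap_apply.continuous.comp
          (((contDiff_det'.continuous_fderiv (by simp)).comp hm).prodMk (hjac.comp continuous_snd))
      · exact hf.continuous.comp hpt
    · apply Continuous.mul
      · exact contDiff_det'.continuous.comp hm
      · exact isBoundedBilinearMap_apply.continuous.comp
          (((hf.continuous_fderiv one_ne_zero).comp hpt).prodMk
            ((hθ.continuous.comp continuous_snd).prodMk continuous_const))
  -- uniform bound on the derivative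
  obtain ⟨C, hC⟩ : ∃ C : ℝ, ∀ p ∈ (Set.Icc (-1:ℝ) 1) ×ˢ closure Ω, ‖F' p.1 p.2‖ ≤ C :=
    (isCompact_Icc.prod hQ).exists_bound_of_continuousOn hF'cont.continuousOn
  -- dominated differentiation under the integral sign
  have key := hasDerivAt_integral_of_dominated_loc_of_deriv_le (μ := volume.restrict Ω)
    (F := F) (F' := F') (x₀ := (0:ℝ)) (bound := fun _ => C) (Metric.ball_mem_nhds (0:ℝ) hεpos)
    (Filter.Eventually.of_forall fun t => (hFcont t).aestronglyMeasurable)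
    (((hFcont 0).continuousOn.integrableOn_compact hQ).mono_set subset_closure)
    ((hF'cont.comp (Continuous.prodMk_right (0:ℝ))).aestronglyMeasurable)
    (by
      refine (ae_restrict_iff' hΩo.measurableSet).2 (Filter.Eventually.of_forall fun x hx t ht => ?_)
      have h1 : |t| < ε := by simpa [Real.dist_eq] using ht
      have h2 : t ∈ Set.Icc (-1:ℝ) 1 := by
        have := h1.le.trans (min_le_right _ _)
        constructor <;> [linarith [neg_abs_le t]; linarith [le_abs_self t]]
      exact hC (t, x) ⟨h2, subset_closure hx⟩)
    (integrableOn_const hΩb.measure_lt_top.ne)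
    (Filter.Eventually.of_forall fun x => fun t _ => hFdiff x t)
  -- identify the value of the derivative
  have hval : (∫ x in Ω, F' 0 x) =
      ∫ x in Ω, (deriv (fun t : ℝ => f (x + t • θ x, t)) 0 + (jac θ x).trace * f (x, 0)) := by
    apply integral_congr_ae
    apply Filter.Eventually.of_forall
    intro x
    have hder : deriv (fun t : ℝ => f (x + t • θ x, t)) 0 = fderiv ℝ f (x, 0) (θ x, 1) := by
      have := (hcomp x 0).deriv
      simpa using this
    rw [hF']
    simp only [zero_smul, add_zero]
    rw [fderiv_det_one_apply, Matrix.det_one, one_mul, hder]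
    ring
  -- the two functions of t agree near 0
  have heq : (fun t : ℝ => ∫ y in (fun x => x + t • θ x) '' Ω, f (y, t)) =ᶠ[nhds 0]
      (fun t : ℝ => ∫ x in Ω, F t x) := by
    filter_upwards [Metric.ball_mem_nhds (0:ℝ) hεpos] with t ht
    have h1 : |t| < ε := by simpa [Real.dist_eq] using ht
    rw [integral_image_eq_integral_abs_det_fderiv_smul volume hΩo.measurableSet
      (fun x _ => (hφderiv t x).hasFDerivWithinAt)
      ((hinj t (hεK t h1)).injOn) (fun y => f (y, t))]
    apply setIntegral_congr_fun hΩo.measurableSet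
    intro x hx
    show |(A t x).det| • f (x + t • θ x, t) = F t x
    have h2 : (0:ℝ) < Matrix.det (1 + t • jac θ x) :=
      lt_trans (by norm_num) (hpos t (lt_of_lt_of_le h1 ((min_le_left _ _).trans (min_le_right _ _)))
        x (subset_closure hx))
    rw [hdetA, smul_eq_mul, abs_of_pos h2]
  exact (hval ▸ key.2).congr_of_eventuallyEq heq

end TransportAux
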